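/- For ξ₁ = (θ̇₁, ȧ₁) and ξ₂ = (θ̇₂, ȧ₂) in ℝ × ℂ, and with J_ξ(z) = −Σ_n Γ_n (θ̇ |z_n|²/2 + ω₀(z_n, ȧ)), the following momentum commutation identity holds for every z ∈ ℂ^N: Σ_n Γ_n ω₀(iθ̇₁ z_n + ȧ₁, iθ̇₂ z_n + ȧ₂) = J_{[ξ₁,ξ₂]}(z) + (Σ_n Γ_n)·ω₀(ȧ₁, ȧ₂), where [ξ₁,ξ₂] = (0, i(θ̇₁ ȧ₂ − θ̇₂ ȧ₁)) is the Lie bracket of se(2). In other words, the Poisson bracket of J_{ξ₁} and J_{ξ₂} with respect to ω^pl differs from J_{[ξ₁,ξ₂]} by the constant (Σ_n Γ_n)·ω₀(ȧ₁, ȧ₂), which vanishes (for all ȧ₁, ȧ₂) exactly when the total vortex strength is zero. -/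

import Mathlib

open Complex Finset

/-- `ω₀(a,b) = -Im(a·conj(b))`. -/
noncomputable def om0 (a b : ℂ) : ℝ := -(a * (starRingEnd ℂ) b).im

/-- The momentum function `J_ξ(z) = -∑ Γₙ(θ̇|zₙ|²/2 + ω₀(zₙ, ȧ))` for `ξ = (θ̇, ȧ)`. -/
noncomputable def Jxi {N : ℕ} (Γ : Fin N → ℝ) (θd : ℝ) (ad : ℂ) (z : Fin N → ℂ) : ℝ :=
  -∑ n, Γ n * (θd * ‖z n‖ ^ 2 / 2 + om0 (z n) ad)

/-- Momentum commutation identity: the `ω^pl`-pairing of the infinitesimal actions of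
`ξ₁ = (θ̇₁, ȧ₁)` and `ξ₂ = (θ̇₂, ȧ₂)` (i.e. the Poisson bracket `{J_{ξ₁}, J_{ξ₂}}`) equals
`J_{[ξ₁,ξ₂]} + (∑Γₙ)ω₀(ȧ₁,ȧ₂)`, where `[ξ₁,ξ₂] = (0, i(θ̇₁ȧ₂ - θ̇₂ȧ₁))`; the constant
deviation vanishes for all `ȧ₁, ȧ₂` exactly when the total vortex strength is zero. -/
theorem momentum_commutation {N : ℕ} (Γ : Fin N → ℝ) (θd₁ θd₂ : ℝ) (ad₁ ad₂ : ℂ) :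
    (∀ z : Fin N → ℂ,
        ∑ n, Γ n * om0 (Complex.I * θd₁ * z n + ad₁) (Complex.I * θd₂ * z n + ad₂)
          = Jxi Γ 0 (Complex.I * (θd₁ * ad₂ - θd₂ * ad₁)) z
              + (∑ n, Γ n) * om0 ad₁ ad₂) ∧
    ((∀ a₁ a₂ : ℂ, (∑ n, Γ n) * om0 a₁ a₂ = 0) ↔ (∑ n, Γ n) = 0) := by
  constructor
  · intro z
    rw [Jxi, Finset.sum_mul, ← Finset.sum_neg_distrib, ← Finset.sum_add_distrib]
    refine Finset.sum_congr rfl fun n _ => ?_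
    simp only [om0]
    simp [Complex.add_im, Complex.mul_im, Complex.mul_re, Complex.ext_iff]
    ring
  · constructor
    · intro h
      have := h 1 Complex.I
      simp [om0] at this
      exact this
    · intro h a₁ a₂; rw [h]; ring
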